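/- Let R be the subring of the free ring ℤ⟨a,b,c⟩ (on three noncommuting generators, without identity) generated by the five elements ba, ba², a³, a²c, ac. Then R is finitely generated but not finitely presented as a ring. -/

import Mathlib

/-- The free non-unital associative `K`-algebra on `X`: the semigroup algebra of the free
semigroup `X⁺` over `K`. -/
abbrev FreeNUAlg (K X : Type*) [CommRing K] : Type _ := MonoidAlgebra K (FreeSemigroup X)

/-- The two-sided ideal (as a `K`-submodule closed under left and right multiplication)
generated by a set in a non-unital `K`-algebra. -/
def idealSpan (K : Type*) {A : Type*} [CommRing K] [NonUnitalRing A] [Module K A]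
    (s : Set A) : Submodule K A :=
  sInf {J : Submodule K A | s ⊆ J ∧ ∀ a b : A, b ∈ J → a * b ∈ J ∧ b * a ∈ J}

/-- A non-unital `K`-algebra is finitely generated if some finite subset generates it as a
`K`-algebra. -/
def NUAlgFG (K A : Type*) [CommRing K] [NonUnitalRing A] [Module K A]
    [IsScalarTower K A A] [SMulCommClass K A A] : Prop :=
  ∃ s : Finset A, NonUnitalAlgebra.adjoin K (s : Set A) = ⊤

/-- A non-unital `K`-algebra is finitely presented if it is isomorphic to the quotient of a
free algebra `K⟨X⟩` on a finite set `X` by a finitely generated two-sided ideal, i.e. there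
is a surjection from some `K⟨X⟩`, `X` finite, whose kernel is a finitely generated
two-sided ideal. -/
def NUAlgFP (K A : Type*) [CommRing K] [NonUnitalRing A] [Module K A]
    [IsScalarTower K A A] [SMulCommClass K A A] : Prop :=
  ∃ (n : ℕ) (f : FreeNUAlg K (Fin n) →ₙₐ[K] A),
    Function.Surjective f ∧
      ∃ s : Finset (FreeNUAlg K (Fin n)),
        ∀ x, f x = 0 ↔ x ∈ idealSpan K (s : Set (FreeNUAlg K (Fin n)))

/-- The generator `a`, `b`, `c` of the free ring `ℤ⟨a,b,c⟩`, realized as the elements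
`a = single(a) 1` etc. of the semigroup ring of the free semigroup on three letters. -/
noncomputable def gen (i : Fin 3) : FreeNUAlg ℤ (Fin 3) :=
  MonoidAlgebra.single (FreeSemigroup.of i) (1 : ℤ)

/-- The subring of `ℤ⟨a,b,c⟩` generated by `ba, ba², a³, a²c, ac`. -/
noncomputable def exampleSubring : NonUnitalSubring (FreeNUAlg ℤ (Fin 3)) :=
  NonUnitalSubring.closure
    {gen 1 * gen 0, gen 1 * gen 0 * gen 0, gen 0 * gen 0 * gen 0,
      gen 0 * gen 0 * gen 2, gen 0 * gen 2}

/-!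
`R` is the image of the substitution `ℤ⟨x₀,…,x₄⟩ → ℤ⟨a,b,c⟩` sending `x₀, …, x₄` to
`ba, ba², a³, a²c, ac`, so it is finitely generated, and if it were finitely presented, the kernel
of this substitution would be generated, as an ideal, by finitely many elements. The kernel
contains `x₀x₂ᵏx₃ - x₁x₂ᵏx₄` for every `k`. Every factorization of `x₀x₂ᵏx₃` is `(x₀x₂ⁱ)(x₂ʲx₃)`,
and each of these two factors is the only word with its image; so the product, on either side,
of any element with a kernel element has zero coefficient at `x₀x₂ᵏx₃`, and hence so does every
element of the ideal generated by kernel elements vanishing there. Taking `k` so large that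
`x₀x₂ᵏx₃` lies outside the supports of the finitely many generators gives a contradiction.
-/

section IdealSpan

variable {K A B : Type*} [CommRing K] [NonUnitalRing A] [Module K A] [NonUnitalRing B]
  [Module K B]

lemma subset_idealSpan (s : Set A) : s ⊆ idealSpan K s :=
  fun _ hx => Submodule.mem_sInf.2 fun _ hJ => hJ.1 hx

lemma idealSpan_le {s : Set A} {J : Submodule K A} (hs : s ⊆ J)
    (hJ : ∀ a b : A, b ∈ J → a * b ∈ J ∧ b * a ∈ J) : idealSpan K s ≤ J :=
  sInf_le ⟨hs, hJ⟩

lemma mul_mem_idealSpan_left {s : Set A} (a : A) {b : A} (hb : b ∈ idealSpan K s) :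
    a * b ∈ idealSpan K s :=
  Submodule.mem_sInf.2 fun J hJ => (hJ.2 a b (Submodule.mem_sInf.1 hb J hJ)).1

lemma mul_mem_idealSpan_right {s : Set A} (a : A) {b : A} (hb : b ∈ idealSpan K s) :
    b * a ∈ idealSpan K s :=
  Submodule.mem_sInf.2 fun J hJ => (hJ.2 a b (Submodule.mem_sInf.1 hb J hJ)).2

lemma idealSpan_mono {s t : Set A} (h : s ⊆ t) : idealSpan K s ≤ idealSpan K t :=
  idealSpan_le (h.trans (subset_idealSpan t))
    fun a _ hb => ⟨mul_mem_idealSpan_left a hb, mul_mem_idealSpan_right a hb⟩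

lemma map_mem_idealSpan_image (f : A →ₙₐ[K] B) {s : Set A} {x : A} (hx : x ∈ idealSpan K s) :
    f x ∈ idealSpan K (f '' s) := by
  let J : Submodule K A :=
    { carrier := {y | f y ∈ idealSpan K (f '' s)}
      add_mem' := fun ha hb => by simpa using add_mem ha hb
      zero_mem' := by simp
      smul_mem' := fun r y hy => by simpa using Submodule.smul_mem _ r hy }
  refine idealSpan_le (J := J) (fun y hy => subset_idealSpan _ ⟨y, hy, rfl⟩)
    (fun a b hb => ⟨?_, ?_⟩) hx
  · show f (a * b) ∈ idealSpan K (f '' s)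
    simpa using mul_mem_idealSpan_left (f a) hb
  · show f (b * a) ∈ idealSpan K (f '' s)
    simpa using mul_mem_idealSpan_right (f a) hb

end IdealSpan

section

variable {K A : Type*} [CommRing K] [NonUnitalRing A] [Module K A] [IsScalarTower K A A]
  [SMulCommClass K A A]

lemma sub_map_mem_idealSpan {s D : Set A} (hs : NonUnitalAlgebra.adjoin K s = ⊤)
    (θ : A →ₙₐ[K] A) (hθ : ∀ x ∈ s, x - θ x ∈ idealSpan K D) (u : A) :
    u - θ u ∈ idealSpan K D := by
  have hu : u ∈ NonUnitalAlgebra.adjoin K s := hs ▸ NonUnitalAlgebra.mem_top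
  induction hu using NonUnitalAlgebra.adjoin_induction with
  | mem x hx => exact hθ x hx
  | add x y _ _ hx hy =>
    rw [map_add, add_sub_add_comm]
    exact add_mem hx hy
  | zero => simp
  | mul x y _ _ hx hy =>
    rw [map_mul, show x * y - θ x * θ y = (x - θ x) * y + θ x * (y - θ y) by
      rw [sub_mul, mul_sub, sub_add_sub_cancel]]
    exact add_mem (mul_mem_idealSpan_right y hx) (mul_mem_idealSpan_left (θ x) hy)
  | smul r x _ hx =>
    rw [map_smul, ← smul_sub]
    exact Submodule.smul_mem _ r hx

end

namespace FreeNUAlg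

variable (K : Type*) {α : Type*} [CommRing K]

noncomputable def X (i : α) : FreeNUAlg K α := MonoidAlgebra.single (.of i) 1

lemma single_of_mul (i : α) (w : FreeSemigroup α) :
    (MonoidAlgebra.single (.of i * w) 1 : FreeNUAlg K α) = X K i * MonoidAlgebra.single w 1 := by
  rw [X, MonoidAlgebra.single_mul_single, one_mul]

lemma adjoin_range_X : NonUnitalAlgebra.adjoin K (Set.range (X K (α := α))) = ⊤ := by
  refine NonUnitalAlgebra.eq_top_iff.2 fun u => ?_
  have hsingle (w : FreeSemigroup α) :
      MonoidAlgebra.single w 1 ∈ NonUnitalAlgebra.adjoin K (Set.range (X K)) := by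
    induction w using FreeSemigroup.recOnMul with
    | ih1 i => exact NonUnitalAlgebra.subset_adjoin K ⟨i, rfl⟩
    | ih2 i w _ hw =>
      rw [single_of_mul]
      exact mul_mem (NonUnitalAlgebra.subset_adjoin K ⟨i, rfl⟩) hw
  induction u using MonoidAlgebra.induction_linear with
  | zero => exact zero_mem _
  | add u v hu hv => exact add_mem hu hv
  | single w r =>
    rw [← mul_one r, ← MonoidAlgebra.smul_single']
    exact SMulMemClass.smul_mem r (hsingle w)

variable {K}
variable {A B : Type*} [NonUnitalRing A] [Module K A] [NonUnitalRing B] [Module K B]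

lemma hom_ext {φ ψ : FreeNUAlg K α →ₙₐ[K] A} (h : ∀ i, φ (X K i) = ψ (X K i)) : φ = ψ := by
  refine MonoidAlgebra.nonUnitalAlgHom_ext K fun w => ?_
  induction w using FreeSemigroup.recOnMul with
  | ih1 i => exact h i
  | ih2 i w _ hw => rw [single_of_mul, map_mul, map_mul, h, hw]

variable [IsScalarTower K A A] [SMulCommClass K A A]

noncomputable def lift (F : α → A) : FreeNUAlg K α →ₙₐ[K] A :=
  MonoidAlgebra.liftMagma K (FreeSemigroup.lift F)

@[simp]
lemma lift_X (F : α → A) (i : α) : lift F (X K i) = F i := by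
  simp [lift, X]

lemma exists_comp_eq_of_surjective (f : A →ₙₐ[K] B) (hf : Function.Surjective f)
    (φ : FreeNUAlg K α →ₙₐ[K] B) : ∃ ψ : FreeNUAlg K α →ₙₐ[K] A, f.comp ψ = φ := by
  choose F hF using fun i => hf (φ (X K i))
  exact ⟨lift F, hom_ext fun i => by simp [hF]⟩

lemma nuAlgFG [Finite α] : NUAlgFG K (FreeNUAlg K α) := by
  classical
  have := Fintype.ofFinite α
  exact ⟨Finset.univ.image (X K), by simpa using adjoin_range_X K⟩

end FreeNUAlg

open FreeNUAlg

section

variable {K A B : Type*} [CommRing K] [NonUnitalRing A] [Module K A] [IsScalarTower K A A]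
  [SMulCommClass K A A] [NonUnitalRing B] [Module K B] [IsScalarTower K B B] [SMulCommClass K B B]

lemma NUAlgFG.of_surjective (hB : NUAlgFG K B) (f : B →ₙₐ[K] A) (hf : Function.Surjective f) :
    NUAlgFG K A := by
  classical
  obtain ⟨s, hs⟩ := hB
  refine ⟨s.image f, ?_⟩
  rw [Finset.coe_image, ← NonUnitalAlgHom.map_adjoin, hs, NonUnitalAlgebra.map_top,
    NonUnitalAlgebra.range_eq_top]
  exact hf

theorem NUAlgFP.exists_finset_ker (hA : NUAlgFP K A) {α : Type*} [Finite α]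
    (π : FreeNUAlg K α →ₙₐ[K] A) (hπ : Function.Surjective π) :
    ∃ D : Finset (FreeNUAlg K α), (∀ t ∈ D, π t = 0) ∧
      ∀ u, π u = 0 → u ∈ idealSpan K (D : Set (FreeNUAlg K α)) := by
  classical
  have := Fintype.ofFinite α
  obtain ⟨n, f, hf, s, hs⟩ := hA
  obtain ⟨g, hg⟩ := exists_comp_eq_of_surjective f hf π
  obtain ⟨h, hh⟩ := exists_comp_eq_of_surjective π hπ f
  have hπhg (u : FreeNUAlg K α) : π (h (g u)) = π u := by
    rw [← NonUnitalAlgHom.comp_apply, hh, ← NonUnitalAlgHom.comp_apply, hg]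
  let D₁ := Finset.univ.image fun i => X K i - h (g (X K i))
  let D₂ := s.image h
  refine ⟨D₁ ∪ D₂, ?_, fun u hu => ?_⟩
  · intro t ht
    rcases Finset.mem_union.1 ht with ht | ht
    · obtain ⟨i, -, rfl⟩ := Finset.mem_image.1 ht
      rw [map_sub, hπhg, sub_self]
    · obtain ⟨r, hr, rfl⟩ := Finset.mem_image.1 ht
      rw [← NonUnitalAlgHom.comp_apply, hh]
      exact (hs r).2 (subset_idealSpan _ hr)
  have hD₁ : u - h (g u) ∈ idealSpan K (D₁ : Set (FreeNUAlg K α)) :=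
    sub_map_mem_idealSpan (adjoin_range_X K) (h.comp g)
      (by rintro _ ⟨i, rfl⟩; exact subset_idealSpan _ (by simp [D₁])) u
  have hD₂ : h (g u) ∈ idealSpan K (D₂ : Set (FreeNUAlg K α)) := by
    rw [Finset.coe_image]
    refine map_mem_idealSpan_image h ((hs _).1 ?_)
    rw [← NonUnitalAlgHom.comp_apply, hg, hu]
  simpa using add_mem (idealSpan_mono (Finset.coe_subset.2 Finset.subset_union_left) hD₁)
    (idealSpan_mono (Finset.coe_subset.2 Finset.subset_union_right) hD₂)

end

section MapDomain

open MonoidAlgebra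

variable {K S T : Type*} [CommRing K] [Semigroup S] [Semigroup T]

def IsUniquePreimage (W : S → T) (w : S) : Prop := ∀ w', W w' = W w → w' = w

variable {W : S →ₙ* T} {y : MonoidAlgebra K S} {w : S}

lemma coeff_eq_zero_of_mapDomain_eq_zero (hy : mapDomainNonUnitalAlgHom K K W y = 0)
    (hw : IsUniquePreimage W w) : y.coeff w = 0 := by
  classical
  have hWw : (mapDomain W y).coeff (W w) = 0 := by
    change (mapDomainNonUnitalAlgHom K K W y).coeff _ = 0
    rw [hy]
    rfl
  rwa [coeff_mapDomain, Finsupp.mapDomain_apply_eq_sum, Finset.sum_eq_single w] at hWw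
  · intro v hv hvw
    exact absurd (hw v (Finset.mem_filter.1 hv).2) hvw
  · intro hw'
    by_contra hne
    exact hw' (Finset.mem_filter.2 ⟨Finsupp.mem_support_iff.2 hne, rfl⟩)

lemma coeff_mul_eq_zero_of_mapDomain_eq_zero_right (hy : mapDomainNonUnitalAlgHom K K W y = 0)
    (hw : ∀ u v, u * v = w → IsUniquePreimage W v) (x : MonoidAlgebra K S) :
    (x * y).coeff w = 0 := by
  classical
  rw [coeff_mul]
  refine Finset.sum_eq_zero fun u _ => Finset.sum_eq_zero fun v _ => ?_
  dsimp only
  split_ifs with huv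
  · rw [coeff_eq_zero_of_mapDomain_eq_zero hy (hw u v huv), mul_zero]
  · rfl

lemma coeff_mul_eq_zero_of_mapDomain_eq_zero_left (hy : mapDomainNonUnitalAlgHom K K W y = 0)
    (hw : ∀ u v, u * v = w → IsUniquePreimage W u) (x : MonoidAlgebra K S) :
    (y * x).coeff w = 0 := by
  classical
  rw [coeff_mul]
  refine Finset.sum_eq_zero fun u _ => Finset.sum_eq_zero fun v _ => ?_
  dsimp only
  split_ifs with huv
  · rw [coeff_eq_zero_of_mapDomain_eq_zero hy (hw u v huv), zero_mul]
  · rfl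

lemma coeff_eq_zero_of_mem_idealSpan {D : Set (MonoidAlgebra K S)}
    (hD : ∀ t ∈ D, mapDomainNonUnitalAlgHom K K W t = 0 ∧ t.coeff w = 0)
    (hw : ∀ u v, u * v = w → IsUniquePreimage W u ∧ IsUniquePreimage W v)
    (hy : y ∈ idealSpan K D) : y.coeff w = 0 := by
  let J : Submodule K (MonoidAlgebra K S) :=
    { carrier := {t | mapDomainNonUnitalAlgHom K K W t = 0 ∧ t.coeff w = 0}
      add_mem' := fun ha hb => ⟨by rw [map_add, ha.1, hb.1, add_zero], by simp [ha.2, hb.2]⟩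
      zero_mem' := by simp
      smul_mem' := fun r t ht => ⟨by rw [map_smul, ht.1, smul_zero], by simp [ht.2]⟩ }
  refine (idealSpan_le (J := J) hD (fun a b hb => ⟨⟨?_, ?_⟩, ⟨?_, ?_⟩⟩) hy).2
  · rw [map_mul, hb.1, mul_zero]
  · exact coeff_mul_eq_zero_of_mapDomain_eq_zero_right hb.1 (fun u v h => (hw u v h).2) a
  · rw [map_mul, hb.1, zero_mul]
  · exact coeff_mul_eq_zero_of_mapDomain_eq_zero_left hb.1 (fun u v h => (hw u v h).1) a

end MapDomain

lemma exists_coeff_eq_zero {K S ι : Type*} [Semiring K] [Infinite ι]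
    (D : Finset (MonoidAlgebra K S)) {w : ι → S} (hw : Function.Injective w) : ∃ k, ∀ t ∈ D, t.coeff (w k) = 0 := by
  classical
  obtain ⟨k, hk⟩ := Infinite.exists_notMem_finset ((D.biUnion fun t => t.coeff.support).preimage
    w hw.injOn)
  refine ⟨k, fun t ht => ?_⟩
  by_contra hne
  exact hk (Finset.mem_preimage.2 (Finset.mem_biUnion.2 ⟨t, ht, Finsupp.mem_support_iff.2 hne⟩))

namespace FreeSemigroup

variable {α β : Type*}

def toList (x : FreeSemigroup α) : List α := x.head :: x.tail

@[simp]
lemma toList_mul (x y : FreeSemigroup α) : (x * y).toList = x.toList ++ y.toList := rfl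

@[simp]
lemma toList_of (a : α) : (of a).toList = [a] := rfl

lemma toList_injective : Function.Injective (toList (α := α)) := by
  rintro ⟨a, l⟩ ⟨b, m⟩ h
  simpa [toList] using h

lemma toList_ne_nil (x : FreeSemigroup α) : x.toList ≠ [] := List.cons_ne_nil _ _

lemma toList_lift (F : α → FreeSemigroup β) (x : FreeSemigroup α) :
    (lift F x).toList = x.toList.flatMap (toList ∘ F) := by
  induction x using FreeSemigroup.recOnMul with
  | ih1 a => simp
  | ih2 a x _ hx => simp [hx]

end FreeSemigroup

namespace exampleSubring

open List
open FreeSemigroup (toList toList_injective toList_lift)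

/-- The generators `ba, ba², a³, a²c, ac` of the subring, with `a, b, c` numbered `0, 1, 2`. -/
def block : Fin 5 → FreeSemigroup (Fin 3) :=
  ![⟨1, [0]⟩, ⟨1, [0, 0]⟩, ⟨0, [0, 0]⟩, ⟨0, [0, 2]⟩, ⟨0, [2]⟩]

noncomputable def subst : FreeSemigroup (Fin 5) →ₙ* FreeSemigroup (Fin 3) :=
  FreeSemigroup.lift block

lemma toList_subst (u : FreeSemigroup (Fin 5)) :
    (subst u).toList = u.toList.flatMap (toList ∘ block) :=
  toList_lift block u

lemma eq_replicate_of_flatMap_block {l : List (Fin 5)}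
    (h : ∀ y ∈ l.flatMap (toList ∘ block), y = 0) : l = replicate l.length 2 := by
  have hblock : ∀ x : Fin 5, (∀ y ∈ (block x).toList, y = 0) → x = 2 := by decide
  exact eq_replicate_iff.2 ⟨rfl, fun x hx => hblock x fun y hy => h y (mem_flatMap.2 ⟨x, hx, hy⟩)⟩

lemma flatMap_block_replicate (n : ℕ) :
    (replicate n 2).flatMap (toList ∘ block) = replicate (3 * n) 0 := by
  induction n with
  | zero => rfl
  | succ n ih =>
    rw [replicate_succ, flatMap_cons, ih, Nat.mul_succ, Nat.add_comm, replicate_add]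
    rfl

lemma isUniquePreimage_subst_of_toList_eq_cons {u : FreeSemigroup (Fin 5)} {i : ℕ}
    (hu : u.toList = 0 :: replicate i 2) : IsUniquePreimage subst u := by
  rintro ⟨x, l⟩ h
  have hl := congrArg toList h
  rw [toList_subst, toList_subst, hu] at hl
  change (x :: l).flatMap _ = _ at hl
  rw [flatMap_cons, flatMap_cons, flatMap_block_replicate] at hl
  obtain ⟨hx, hrest⟩ := List.cons.inj (show (block x).head :: ((block x).tail ++ _) =
    1 :: 0 :: replicate (3 * i) 0 from hl)
  have hl2 : l = replicate l.length 2 := eq_replicate_of_flatMap_block fun y hy =>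
    eq_of_mem_replicate (n := 3 * i + 1) <| by
      rw [replicate_succ, ← hrest]
      exact mem_append_right _ hy
  have hlen := congrArg length hrest
  rw [hl2, flatMap_block_replicate, length_append] at hlen
  simp only [length_replicate, length_cons] at hlen
  have hblock : ∀ x : Fin 5, (block x).head = 1 → (block x).tail.length % 3 = 1 → x = 0 := by
    decide
  obtain rfl := hblock x hx (by omega)
  have hi : l.length = i := by
    have : (block 0).tail.length = 1 := rfl
    omega
  exact toList_injective (by rw [hu, hl2, hi]; rfl)

lemma isUniquePreimage_subst_of_toList_eq_append {u : FreeSemigroup (Fin 5)} {j : ℕ}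
    (hu : u.toList = replicate j 2 ++ [3]) : IsUniquePreimage subst u := by
  intro u' h
  obtain ⟨p, z, hpz⟩ := (eq_nil_or_concat' u'.toList).resolve_left u'.toList_ne_nil
  obtain ⟨q, c, hqc⟩ := (eq_nil_or_concat' (block z).toList).resolve_left (block z).toList_ne_nil
  have hl := congrArg toList h
  rw [toList_subst, toList_subst, hu, hpz, flatMap_append, flatMap_append,
    flatMap_block_replicate, flatMap_singleton, flatMap_singleton] at hl
  change p.flatMap _ ++ (block z).toList = replicate (3 * j) 0 ++ [0, 0, 2] at hl
  rw [hqc, ← append_assoc, show [(0 : Fin 3), 0, 2] = replicate 2 0 ++ [2] from rfl,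
    ← append_assoc, ← replicate_add] at hl
  obtain ⟨hrest, hc⟩ := append_inj' hl rfl
  have hp : p = replicate p.length 2 := eq_replicate_of_flatMap_block fun y hy =>
    eq_of_mem_replicate (hrest ▸ mem_append_left q hy)
  have hlen := congrArg length hrest
  rw [hp, flatMap_block_replicate] at hlen
  simp only [length_append, length_replicate] at hlen
  have hblock : ∀ z : Fin 5, (block z).toList.getLast? = some 2 →
      (block z).toList.length % 3 = 0 → z = 3 := by
    decide
  obtain rfl := hblock z (by rw [hqc, getLast?_concat, cons.inj hc |>.1])
    (by rw [hqc, length_append, length_singleton]; omega)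
  have hj : p.length = j := by
    have : q.length + 1 = 3 := by rw [← length_singleton (a := c), ← length_append, ← hqc]; rfl
    omega
  exact toList_injective (by rw [hu, hpz, hp, hj])

def lhsWord (k : ℕ) : FreeSemigroup (Fin 5) := ⟨0, replicate k 2 ++ [3]⟩

def rhsWord (k : ℕ) : FreeSemigroup (Fin 5) := ⟨1, replicate k 2 ++ [4]⟩

/-- `ba · (a³)ᵏ · a²c = ba² · (a³)ᵏ · ac` -/
lemma subst_lhsWord (k : ℕ) : subst (lhsWord k) = subst (rhsWord k) := by
  refine toList_injective ?_
  rw [toList_subst, toList_subst]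
  change (0 :: (replicate k 2 ++ [3])).flatMap _ = (1 :: (replicate k 2 ++ [4])).flatMap _
  simp only [flatMap_cons, flatMap_append, flatMap_block_replicate]
  change (1 : Fin 3) :: 0 :: (replicate (3 * k) 0 ++ [0, 0, 2]) =
    1 :: 0 :: (0 :: replicate (3 * k) 0 ++ [0, 2])
  rw [← replicate_succ, replicate_succ', append_assoc]
  rfl

lemma lhsWord_injective : Function.Injective lhsWord := fun k l h => by
  simpa [lhsWord] using h

lemma isUniquePreimage_of_mul_eq_lhsWord {u v : FreeSemigroup (Fin 5)} {k : ℕ}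
    (h : u * v = lhsWord k) : IsUniquePreimage subst u ∧ IsUniquePreimage subst v := by
  have hl : u.head :: (u.tail ++ v.toList) = 0 :: (replicate k 2 ++ [3]) := congrArg toList h
  obtain ⟨hu, hrest⟩ := cons.inj hl
  obtain ⟨p, z, hpz⟩ := (eq_nil_or_concat' v.toList).resolve_left v.toList_ne_nil
  rw [hpz, ← append_assoc] at hrest
  obtain ⟨hrep, hz⟩ := append_inj' hrest rfl
  obtain ⟨-, hut, hp⟩ := append_eq_replicate_iff.1 hrep
  refine ⟨isUniquePreimage_subst_of_toList_eq_cons (i := u.tail.length) ?_,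
    isUniquePreimage_subst_of_toList_eq_append (j := p.length) ?_⟩
  · change u.head :: u.tail = _
    rw [hu, ← hut]
  · rw [hpz, ← hp, (cons.inj hz).1]

noncomputable def substHom : FreeNUAlg ℤ (Fin 5) →ₙₐ[ℤ] FreeNUAlg ℤ (Fin 3) :=
  MonoidAlgebra.mapDomainNonUnitalAlgHom ℤ ℤ subst

@[simp]
lemma substHom_single (w : FreeSemigroup (Fin 5)) (r : ℤ) :
    substHom (MonoidAlgebra.single w r) = MonoidAlgebra.single (subst w) r :=
  MonoidAlgebra.mapDomain_single

lemma substHom_X (i : Fin 5) :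
    substHom (X ℤ i) = ![gen 1 * gen 0, gen 1 * gen 0 * gen 0, gen 0 * gen 0 * gen 0,
      gen 0 * gen 0 * gen 2, gen 0 * gen 2] i := by
  rw [X, substHom_single, subst, FreeSemigroup.lift_of]
  fin_cases i <;> simp [gen, MonoidAlgebra.single_mul_single] <;> rfl

lemma substHom_mem (u : FreeNUAlg ℤ (Fin 5)) : substHom u ∈ exampleSubring := by
  have hu : u ∈ NonUnitalAlgebra.adjoin ℤ (Set.range (X ℤ)) :=
    adjoin_range_X ℤ ▸ NonUnitalAlgebra.mem_top
  induction hu using NonUnitalAlgebra.adjoin_induction with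
  | mem x hx =>
    obtain ⟨i, rfl⟩ := hx
    refine NonUnitalSubring.subset_closure ?_
    rw [substHom_X]
    fin_cases i <;> simp
  | add x y _ _ hx hy => rw [map_add]; exact add_mem hx hy
  | zero => rw [map_zero]; exact zero_mem _
  | mul x y _ _ hx hy => rw [map_mul]; exact mul_mem hx hy
  | smul r x _ hx => rw [map_zsmul]; exact zsmul_mem hx r

lemma le_range_substHom :
    exampleSubring ≤ (NonUnitalAlgHom.range substHom).toNonUnitalSubring := by
  refine NonUnitalSubring.closure_le.2 ?_
  rintro _ (rfl | rfl | rfl | rfl | rfl)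
  exacts [⟨X ℤ 0, substHom_X 0⟩, ⟨X ℤ 1, substHom_X 1⟩, ⟨X ℤ 2, substHom_X 2⟩,
    ⟨X ℤ 3, substHom_X 3⟩, ⟨X ℤ 4, substHom_X 4⟩]

noncomputable def ofFree : FreeNUAlg ℤ (Fin 5) →ₙₐ[ℤ] exampleSubring where
  toFun u := ⟨substHom u, substHom_mem u⟩
  map_smul' n u := by ext; simp
  map_zero' := by ext; simp
  map_add' u v := by ext; simp
  map_mul' u v := by ext; simp

lemma ofFree_surjective : Function.Surjective ofFree := by
  rintro ⟨x, hx⟩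
  obtain ⟨u, rfl⟩ := le_range_substHom hx
  exact ⟨u, rfl⟩

lemma ofFree_eq_zero_iff {u : FreeNUAlg ℤ (Fin 5)} :
    ofFree u = 0 ↔ substHom u = 0 :=
  Subtype.ext_iff

noncomputable def relation (k : ℕ) : FreeNUAlg ℤ (Fin 5) :=
  MonoidAlgebra.single (lhsWord k) 1 - MonoidAlgebra.single (rhsWord k) 1

lemma substHom_relation (k : ℕ) : substHom (relation k) = 0 := by
  rw [relation, map_sub, substHom_single, substHom_single, subst_lhsWord, sub_self]

lemma coeff_relation (k : ℕ) : (relation k).coeff (lhsWord k) = 1 := by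
  have : rhsWord k ≠ lhsWord k := fun h => by simp [lhsWord, rhsWord] at h
  simp [relation, MonoidAlgebra.coeff_single, this]

end exampleSubring

open exampleSubring

/-- The subring `R` of the free ring `ℤ⟨a,b,c⟩` (on three noncommuting
generators, without identity) generated by the five elements `ba, ba², a³, a²c, ac` is
finitely generated but not finitely presented as a ring (`ℤ`-algebra). -/
theorem exampleSubring_fg_not_fp :
    NUAlgFG ℤ exampleSubring ∧ ¬ NUAlgFP ℤ exampleSubring := by
  refine ⟨nuAlgFG.of_surjective _ ofFree_surjective, fun hfp => ?_⟩
  obtain ⟨D, hD, hker⟩ := hfp.exists_finset_ker _ ofFree_surjective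
  obtain ⟨k, hk⟩ := exists_coeff_eq_zero D lhsWord_injective
  have h := coeff_eq_zero_of_mem_idealSpan (W := subst)
    (fun t ht => ⟨ofFree_eq_zero_iff.1 (hD t ht), hk t ht⟩)
    (fun _ _ => isUniquePreimage_of_mul_eq_lhsWord)
    (hker _ (ofFree_eq_zero_iff.2 (substHom_relation k)))
  rw [coeff_relation] at h
  exact one_ne_zero h
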